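/- Let θ be a generator of the cyclic group F_{q^m}^*, let G be a subgroup of F_q^* of order r ≥ 2, and let φ(x) = ∏_{g ∈ G} ∏_{β ∈ V} (x + g + β) with V an F_q-subspace of dimension t ≤ m-1. Let α_i (2 ≤ i ≤ ℓ) be as in the coset partition lemma (in particular α_i ∉ V). Then for every 1 ≤ τ ≤ q^m - 2, the polynomials φ(θ^τ·x + α_i) and φ(x + α_i) are not equal. -/

import Mathlib

open Polynomial Finset
open scoped Classical

/-- The (additive) coset `a + V` of a set `V`. -/
def coset {K : Type*} [Add K] (V : Set K) (a : K) : Set K := {x | ∃ v ∈ V, x = a + v}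

/-- The polynomial `φ(x) = ∏_{g ∈ G} ∏_{β ∈ V} (x + g + β)`. -/
noncomputable def phiPoly {Fq K : Type*} [Field Fq] [Field K] [Fintype K] [Algebra Fq K]
    (G : Subgroup Kˣ) (V : Submodule Fq K) : Polynomial K :=
  ∏ g : G, ∏ β : V, (X + C ((g : Kˣ) : K) + C (β : K))

/-!
Comparing leading coefficients gives `u ^ (|G| * |V|) = 1` for `u = θ ^ τ`; since `|V|` is a power
of the characteristic and `u ^ (q ^ m - 1) = 1`, already `u ^ |G| = 1`, so `u ∈ G ⊆ F_q^*`. The zero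
set `-(G + V)` of `φ` is stable under multiplication by `u`, so `φ(u x + α) = φ(x + α)` makes it
invariant under translation by `δ = (u - 1) α`. That translation permutes the image `T` of `G` in
`K ⧸ V`, hence `#T • δ ∈ V`; as `#T` is `1` or `|G|`, a unit of `F_q`, `δ ∈ V`, and then `α ∈ V`
because `u - 1 ∈ F_q^*`.
-/

theorem Subgroup.eq_rootsOfUnity_natCard {R : Type*} [CommRing R] [IsDomain R] (G : Subgroup Rˣ)
    [Finite G] : G = rootsOfUnity (Nat.card G) R :=
  Subgroup.eq_of_le_of_card_ge (fun g hg => (mem_rootsOfUnity _ _).mpr <|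
      congrArg Subtype.val (pow_card_eq_one' (x := (⟨g, hg⟩ : G))))
    (card_rootsOfUnity _ _)

theorem pow_eq_one_of_pow_mul_eq_one {M : Type*} [Group M] {k : ℕ} (hk : (Nat.card M).Coprime k)
    {x : M} {n : ℕ} (h : x ^ (n * k) = 1) : x ^ n = 1 :=
  hk.pow_left_bijective.injective (by simpa [← pow_mul] using h)

theorem FiniteField.natCast_ne_zero_of_dvd_card_sub_one {F : Type*} [Field F] [Fintype F] {r : ℕ}
    (hr : r ∣ Fintype.card F - 1) : (r : F) ≠ 0 := by
  intro h
  obtain ⟨k, hk⟩ := hr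
  have : ((Fintype.card F - 1 : ℕ) : F) = 0 := by rw [hk, Nat.cast_mul, h, zero_mul]
  rw [Nat.cast_sub Fintype.card_pos, FiniteField.cast_card_eq_zero] at this
  simp at this

theorem Finset.card_nsmul_eq_zero_of_forall_add_mem {A : Type*} [AddCommGroup A] {T : Finset A}
    {d : A} (h : ∀ t ∈ T, t + d ∈ T) : T.card • d = 0 := by
  have hT : T.map (addRightEmbedding d) = T :=
    Finset.map_eq_of_subset fun x hx => by
      obtain ⟨t, ht, rfl⟩ := Finset.mem_map.mp hx
      exact h t ht
  have hsum := congrArg (fun S => ∑ t ∈ S, t) hT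
  simpa [Finset.sum_add_distrib] using hsum

theorem Polynomial.pow_natDegree_eq_one_of_comp_eq {R : Type*} [CommRing R] [IsDomain R]
    {P : R[X]} {a b : R} (ha : a ≠ 0) (hP : P.natDegree ≠ 0)
    (h : P.comp (C a * X + C b) = P.comp (X + C b)) : a ^ P.natDegree = 1 := by
  have hlc := congrArg leadingCoeff h
  rw [leadingCoeff_comp (by rw [natDegree_linear ha]; exact one_ne_zero),
    leadingCoeff_comp (by simp), leadingCoeff_linear ha, leadingCoeff_X_add_C, one_pow,
    mul_one] at hlc
  have hP0 : P.leadingCoeff ≠ 0 := leadingCoeff_ne_zero.mpr fun h0 => hP (by simp [h0])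
  exact mul_left_cancel₀ hP0 (hlc.trans (mul_one _).symm)

theorem mem_coset_iff {K S : Type*} [AddCommGroup K] [SetLike S K] [AddSubgroupClass S K] {V : S}
    {a x : K} : x ∈ coset (V : Set K) a ↔ x - a ∈ V :=
  ⟨fun ⟨v, hv, hx⟩ => by simpa [hx], fun hx => ⟨x - a, hx, by abel⟩⟩

theorem coset_eq_coset_zero_of_mem {K S : Type*} [AddCommGroup K] [SetLike S K]
    [AddSubgroupClass S K] {V : S} {a : K} (ha : a ∈ V) : coset (V : Set K) a = coset V 0 := by
  ext x
  rw [mem_coset_iff, mem_coset_iff, sub_zero]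
  exact ⟨fun h => by simpa using add_mem h ha, fun h => sub_mem h ha⟩

section PhiPoly

variable {Fq K : Type*} [Field Fq] [Field K] [Algebra Fq K] {G : Subgroup Kˣ} {V : Submodule Fq K}

theorem val_mul_mem (hGF : ∀ g : G, ∃ c : Fq, algebraMap Fq K c = ((g : Kˣ) : K)) (g : G)
    {v : K} (hv : v ∈ V) : ((g : Kˣ) : K) * v ∈ V := by
  obtain ⟨c, hc⟩ := hGF g
  rw [← hc, ← Algebra.smul_def]
  exact V.smul_mem c hv

variable [Fintype K]

noncomputable def imageMod (G : Subgroup Kˣ) (V : Submodule Fq K) : Finset (K ⧸ V) :=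
  univ.image fun g : G => Submodule.Quotient.mk ((g : Kˣ) : K)

theorem phiPoly_eq_prod_X_add_C :
    phiPoly G V = ∏ g : G, ∏ β : V, (X + C (((g : Kˣ) : K) + β)) := by
  simp only [phiPoly, C_add, add_assoc]

theorem natDegree_phiPoly : (phiPoly G V).natDegree = Nat.card G * Nat.card V := by
  rw [phiPoly_eq_prod_X_add_C, natDegree_prod_of_monic _ _ fun g _ =>
    monic_prod_of_monic _ _ fun β _ => monic_X_add_C _,
    Finset.sum_congr rfl fun g _ => natDegree_prod_of_monic _ _ fun β _ => monic_X_add_C _]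
  simp only [natDegree_X_add_C, Finset.sum_const, Finset.card_univ, smul_eq_mul, mul_one,
    Nat.card_eq_fintype_card]

theorem eval_phiPoly_eq_zero_iff {x : K} :
    (phiPoly G V).eval x = 0 ↔ ∃ g : G, x + ((g : Kˣ) : K) ∈ V := by
  simp only [phiPoly, eval_prod, eval_add, eval_X, eval_C, Finset.prod_eq_zero_iff,
    Finset.mem_univ, true_and]
  refine exists_congr fun g => ⟨fun ⟨β, hβ⟩ => ?_, fun h => ⟨⟨_, V.neg_mem h⟩, by simp⟩⟩
  rw [add_eq_zero_iff_eq_neg] at hβ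
  simp [hβ]

theorem mem_of_phiPoly_comp_eq {u : Kˣ} {b : K}
    (h : (phiPoly G V).comp (C (u : K) * X + C b) = (phiPoly G V).comp (X + C b)) : u ∈ G := by
  have hN := Polynomial.pow_natDegree_eq_one_of_comp_eq u.ne_zero
    (by rw [natDegree_phiPoly]; exact (Nat.mul_pos Nat.card_pos Nat.card_pos).ne') h
  rw [natDegree_phiPoly, ← Units.val_pow_eq_pow_val, Units.val_eq_one] at hN
  have hcop : (Nat.card Kˣ).Coprime (Nat.card V) := by
    refine Nat.Coprime.coprime_dvd_right (AddSubgroup.card_addSubgroup_dvd_card V.toAddSubgroup) ?_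
    rw [Nat.card_eq_fintype_card, Fintype.card_units, Nat.card_eq_fintype_card,
      Nat.coprime_self_sub_left Fintype.card_pos]
    exact Nat.coprime_one_left _
  rw [G.eq_rootsOfUnity_natCard, mem_rootsOfUnity]
  exact pow_eq_one_of_pow_mul_eq_one hcop hN

theorem eval_phiPoly_mul_eq_zero_iff
    (hGF : ∀ g : G, ∃ c : Fq, algebraMap Fq K c = ((g : Kˣ) : K)) {u : Kˣ} (hu : u ∈ G) (x : K) :
    (phiPoly G V).eval (u * x) = 0 ↔ (phiPoly G V).eval x = 0 := by
  have key : ∀ w ∈ G, ∀ y : K, (phiPoly G V).eval y = 0 → (phiPoly G V).eval (w * y) = 0 := by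
    intro w hw y hy
    obtain ⟨g, hg⟩ := eval_phiPoly_eq_zero_iff.mp hy
    refine eval_phiPoly_eq_zero_iff.mpr ⟨⟨w, hw⟩ * g, ?_⟩
    simpa [mul_add] using val_mul_mem hGF ⟨w, hw⟩ hg
  exact ⟨fun h => by simpa using key u⁻¹ (inv_mem hu) _ h, key u hu x⟩

theorem eval_phiPoly_add_eq_zero_iff_of_comp_eq
    (hGF : ∀ g : G, ∃ c : Fq, algebraMap Fq K c = ((g : Kˣ) : K)) {u : Kˣ} {b : K}
    (h : (phiPoly G V).comp (C (u : K) * X + C b) = (phiPoly G V).comp (X + C b)) (x : K) :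
    (phiPoly G V).eval (x + ((u : K) - 1) * b) = 0 ↔ (phiPoly G V).eval x = 0 := by
  set y := (u : K)⁻¹ * (x - b)
  have hev := congrArg (eval y) h
  simp only [eval_comp, eval_add, eval_mul, eval_C, eval_X] at hev
  have hx : (u : K) * y + b = x := by simp [y]
  have hxb : x + ((u : K) - 1) * b = u * (y + b) := by rw [← hx]; ring
  rw [hxb, eval_phiPoly_mul_eq_zero_iff hGF (mem_of_phiPoly_comp_eq h), ← hev, hx]

theorem natCast_card_imageMod_ne_zero
    (hGF : ∀ g : G, ∃ c : Fq, algebraMap Fq K c = ((g : Kˣ) : K)) (hG : (Nat.card G : Fq) ≠ 0) :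
    ((imageMod G V).card : Fq) ≠ 0 := by
  by_cases h1 : (1 : K) ∈ V
  · have hcard : (imageMod G V).card = 1 := by
      refine le_antisymm (Finset.card_le_one.mpr ?_) (univ_nonempty.image _).card_pos
      simp only [imageMod, Finset.mem_image, Finset.mem_univ, true_and]
      rintro _ ⟨g, rfl⟩ _ ⟨g', rfl⟩
      rw [Submodule.Quotient.eq]
      simpa using V.sub_mem (val_mul_mem hGF g h1) (val_mul_mem hGF g' h1)
    simp [hcard]
  · have hinj : Function.Injective fun g : G =>
        (Submodule.Quotient.mk ((g : Kˣ) : K) : K ⧸ V) := by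
      intro g g' hgg'
      obtain ⟨c, hc⟩ := hGF g
      obtain ⟨c', hc'⟩ := hGF g'
      have hsub : (c - c') • (1 : K) ∈ V := by
        rw [← Algebra.algebraMap_eq_smul_one, map_sub, hc, hc']
        exact (Submodule.Quotient.eq V).mp hgg'
      have hcc' : c = c' := sub_eq_zero.mp (by_contra fun hne => h1 ((V.smul_mem_iff hne).mp hsub))
      exact Subtype.ext (Units.ext (by rw [← hc, ← hc', hcc']))
    rwa [imageMod, card_image_of_injective _ hinj, card_univ, ← Nat.card_eq_fintype_card]

theorem mem_of_forall_eval_phiPoly_add_eq_zero_iff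
    (hGF : ∀ g : G, ∃ c : Fq, algebraMap Fq K c = ((g : Kˣ) : K)) (hG : (Nat.card G : Fq) ≠ 0)
    {δ : K} (h : ∀ x, (phiPoly G V).eval (x + δ) = 0 ↔ (phiPoly G V).eval x = 0) : δ ∈ V := by
  have hT : ∀ t ∈ imageMod G V, t + Submodule.Quotient.mk δ ∈ imageMod G V := by
    simp only [imageMod, Finset.mem_image, Finset.mem_univ, true_and]
    rintro _ ⟨g, rfl⟩
    have hg : (phiPoly G V).eval (-((g : Kˣ) : K) - δ) = 0 := by
      rw [← h, sub_add_cancel]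
      exact eval_phiPoly_eq_zero_iff.mpr ⟨g, by simp⟩
    obtain ⟨g', hg'⟩ := eval_phiPoly_eq_zero_iff.mp hg
    refine ⟨g', (Submodule.Quotient.eq V).mpr ?_⟩
    convert hg' using 1
    ring
  have hnsmul := Finset.card_nsmul_eq_zero_of_forall_add_mem hT
  rw [← Nat.cast_smul_eq_nsmul Fq, smul_eq_zero] at hnsmul
  exact (Submodule.Quotient.mk_eq_zero V).mp
    (hnsmul.resolve_left (natCast_card_imageMod_ne_zero hGF hG))

theorem mem_of_phiPoly_comp_eq_of_ne_one
    (hGF : ∀ g : G, ∃ c : Fq, algebraMap Fq K c = ((g : Kˣ) : K)) (hG : (Nat.card G : Fq) ≠ 0)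
    {u : Kˣ} (hu : u ≠ 1) {b : K}
    (h : (phiPoly G V).comp (C (u : K) * X + C b) = (phiPoly G V).comp (X + C b)) : b ∈ V := by
  have hδ := mem_of_forall_eval_phiPoly_add_eq_zero_iff hGF hG
    (eval_phiPoly_add_eq_zero_iff_of_comp_eq hGF h)
  obtain ⟨c, hc⟩ := hGF ⟨u, mem_of_phiPoly_comp_eq h⟩
  have hc1 : c - 1 ≠ 0 := sub_ne_zero.mpr fun hc1 => hu (Units.ext (by simpa [hc1] using hc.symm))
  have hcb : ((u : K) - 1) * b = (c - 1) • b := by rw [Algebra.smul_def, map_sub, map_one, hc]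
  rwa [hcb, V.smul_mem_iff hc1] at hδ

end PhiPoly

theorem stmt4_general (q r m t : ℕ)
    (hr : r ∣ q - 1)
    (Fq K : Type*) [Field Fq] [Fintype Fq] [Field K] [Fintype K] [Algebra Fq K]
    (hcq : Fintype.card Fq = q) (hcK : Fintype.card K = q ^ m)
    (V : Submodule Fq K)
    (G : Subgroup Kˣ) (hG : Nat.card G = r)
    (hGsub : ∀ g : G, ∃ a : Fq, algebraMap Fq K a = ((g : Kˣ) : K))
    (θ : Kˣ) (hθ : ∀ x : Kˣ, x ∈ Subgroup.zpowers θ)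
    (α : Fin ((q ^ (m - t) - 1) / r + 1) → K)
    (hne : ∀ (i : Fin ((q ^ (m - t) - 1) / r + 1)) (g : G), i ≠ 0 →
      coset (V : Set K) (α i * ((g : Kˣ) : K)) ≠ coset (V : Set K) 0)
    (i : Fin ((q ^ (m - t) - 1) / r + 1)) (hi : i ≠ 0) :
    ∀ τ : ℕ, 1 ≤ τ → τ ≤ q ^ m - 2 →
      (phiPoly G V).comp (C (((θ : Kˣ) : K) ^ τ) * X + C (α i)) ≠
      (phiPoly G V).comp (X + C (α i)) := by
  intro τ hτ1 hτ2 heq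
  rw [← Units.val_pow_eq_pow_val] at heq
  have hτ : θ ^ τ ≠ 1 := by
    refine pow_ne_one_of_lt_orderOf (by omega) ?_
    rw [orderOf_eq_card_of_forall_mem_zpowers hθ, Nat.card_eq_fintype_card, Fintype.card_units,
      hcK]
    omega
  have hcardG : (Nat.card G : Fq) ≠ 0 :=
    hG ▸ FiniteField.natCast_ne_zero_of_dvd_card_sub_one (hcq ▸ hr)
  have hαV := mem_of_phiPoly_comp_eq_of_ne_one hGsub hcardG hτ heq
  exact hne i 1 hi (by simpa using coset_eq_coset_zero_of_mem hαV)

/-- for `r ≥ 2`, `α_i ∉ V` a partition representative and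
`1 ≤ τ ≤ q^m - 2`, the polynomials `φ(θ^τ x + α_i)` and `φ(x + α_i)` differ. -/
theorem stmt4 (q r m t : ℕ) (hq : IsPrimePow q) (hm : 1 ≤ m) (ht : t ≤ m - 1)
    (hr : r ∣ q - 1)
    (Fq K : Type*) [Field Fq] [Fintype Fq] [Field K] [Fintype K] [Algebra Fq K]
    (hcq : Fintype.card Fq = q) (hcK : Fintype.card K = q ^ m)
    (V : Submodule Fq K) (hV : Module.finrank Fq V = t)
    (G : Subgroup Kˣ) (hG : Nat.card G = r)
    (hGsub : ∀ g : G, ∃ a : Fq, algebraMap Fq K a = ((g : Kˣ) : K))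
    (hr2 : 2 ≤ r)
    (θ : Kˣ) (hθ : ∀ x : Kˣ, x ∈ Subgroup.zpowers θ)
    (α : Fin ((q ^ (m - t) - 1) / r + 1) → K) (hα0 : α 0 = 0)
    (hne : ∀ (i : Fin ((q ^ (m - t) - 1) / r + 1)) (g : G), i ≠ 0 →
      coset (V : Set K) (α i * ((g : Kˣ) : K)) ≠ coset (V : Set K) 0)
    (hinj : ∀ (i j : Fin ((q ^ (m - t) - 1) / r + 1)) (gi gj : G), i ≠ 0 → j ≠ 0 →
      coset (V : Set K) (α i * ((gi : Kˣ) : K)) = coset (V : Set K) (α j * ((gj : Kˣ) : K)) →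
      i = j ∧ gi = gj)
    (hcover : (⋃ i, ⋃ g : G, coset (V : Set K) (α i * ((g : Kˣ) : K))) = Set.univ)
    (i : Fin ((q ^ (m - t) - 1) / r + 1)) (hi : i ≠ 0) :
    ∀ τ : ℕ, 1 ≤ τ → τ ≤ q ^ m - 2 →
      (phiPoly G V).comp (C (((θ : Kˣ) : K) ^ τ) * X + C (α i)) ≠
      (phiPoly G V).comp (X + C (α i)) :=
  stmt4_general q r m t hr Fq K hcq hcK V G hG hGsub θ hθ α hne i hi
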